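/- arXiv:math/0206177 — 2 statements merged into one kernel-verified Lean document; each statement's English description precedes it below -/
import Mathlib

section
/- The series Σ_{μ=0}^∞ (h₀ + 2μ)·[Π_{j=0}^{k} Γ(h_j + μ) / Π_{j=1}^{k} Γ(1 + h₀ - h_j + μ)]·(1/μ!)·(-1)^{(k+1)μ} converges absolutely whenever 1 + Re h₀ > (2/(k-1))·Σ_{j=1}^{k} Re h_j, for integers k ≥ 2. -/
open Complex Filter Topology

/-!
The ratio of consecutive summands is, for large `μ`, the rational function
`∏ᵢ (aᵢ + μ) / (bᵢ + μ)` with `a = (h₀/2 + 1, h₀, h₁, …, h_k)` and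
`b = (h₀/2, 1, 1 + h₀ - h₁, …, 1 + h₀ - h_k)`. Writing it as `F (1/μ)` with `F 0 = 1`,
`μ (‖F (1/μ)‖ - 1)` tends to the derivative of `‖F‖` at `0`, namely
`Re ∑ (aᵢ - bᵢ) = 2 ∑ Re hⱼ - k - (k - 1) Re h₀`, which is `< -1` exactly under the hypothesis.
Raabe's test then concludes: by Bernoulli's inequality the ratio is eventually below
`(μ / (μ + 1))^p` for some `p > 1`, so the summands are `O(μ^(-p))`.
-/

theorem HasDerivAt.norm {F : Type*} [NormedAddCommGroup F] [InnerProductSpace ℝ F]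
    {f : ℝ → F} {f' : F} {x : ℝ} (hf : HasDerivAt f f' x) (hx : f x ≠ 0) :
    HasDerivAt (‖f ·‖) (Inner.inner ℝ (f x) f' / ‖f x‖) x := by
  have hsq : ‖f x‖ ^ 2 ≠ 0 := by positivity
  convert hf.norm_sq.sqrt hsq using 1
  · simp [Real.sqrt_sq (norm_nonneg _)]
  · rw [Real.sqrt_sq (norm_nonneg _)]
    ring

theorem tendsto_natCast_mul_sub_one_of_hasDerivAt {g : ℝ → ℝ} {d : ℝ} (hg : HasDerivAt g d 0)
    (hg0 : g 0 = 1) : Tendsto (fun n : ℕ => (n : ℝ) * (g (n : ℝ)⁻¹ - 1)) atTop (𝓝 d) := by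
  have hinv : Tendsto (fun n : ℕ => (n : ℝ)⁻¹) atTop (𝓝[>] 0) :=
    tendsto_inv_atTop_nhdsGT_zero.comp tendsto_natCast_atTop_atTop
  refine (hg.tendsto_slope_zero_right.comp hinv).congr fun n => ?_
  simp [hg0]

theorem hasDerivAt_one_add_mul_div_one_add_mul (a b : ℂ) :
    HasDerivAt (fun x : ℝ => (1 + x * a) / (1 + x * b)) (a - b) 0 := by
  have hx : HasDerivAt (fun x : ℝ => (x : ℂ)) 1 0 := (hasDerivAt_id (0 : ℝ)).ofReal_comp
  exact (((hx.mul_const a).const_add 1).div ((hx.mul_const b).const_add 1) (by simp)).congr_deriv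
    (by simp)

theorem tendsto_natCast_mul_norm_prod_sub_one {ι : Type*} (s : Finset ι) (a b : ι → ℂ) :
    Tendsto (fun n : ℕ => (n : ℝ) * (‖∏ i ∈ s, (a i + n) / (b i + n)‖ - 1)) atTop
      (𝓝 (∑ i ∈ s, (a i - b i)).re) := by
  classical
  set F : ℝ → ℂ := fun x => ∏ i ∈ s, (1 + x * a i) / (1 + x * b i)
  have hF0 : F 0 = 1 := by simp [F]
  have hF : HasDerivAt F (∑ i ∈ s, (a i - b i)) 0 :=
    (HasDerivAt.fun_finsetProd fun i _ =>
      hasDerivAt_one_add_mul_div_one_add_mul (a i) (b i)).congr_deriv (by simp)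
  have hnorm : HasDerivAt (‖F ·‖) (∑ i ∈ s, (a i - b i)).re 0 := by
    convert hF.norm (by simp [hF0]) using 1
    simp [hF0, Complex.inner]
  refine (tendsto_natCast_mul_sub_one_of_hasDerivAt hnorm (by simp [hF0])).congr' ?_
  filter_upwards [eventually_ne_atTop 0] with n hn
  have hn' : (n : ℂ) ≠ 0 := Nat.cast_ne_zero.mpr hn
  congr 3
  refine Finset.prod_congr rfl fun i _ => ?_
  have hcast : ∀ c : ℂ, 1 + ((n : ℝ)⁻¹ : ℝ) * c = (c + n) / n := fun c => by
    push_cast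
    field_simp
    ring
  rw [hcast, hcast, div_div_div_cancel_right₀ hn']

theorem summable_of_eventually_mul_succ_le_mul_succ {u v : ℕ → ℝ} (hu : ∀ n, 0 ≤ u n)
    (hv : Summable v) (hv0 : ∀ᶠ n in atTop, 0 < v n)
    (huv : ∀ᶠ n in atTop, u (n + 1) * v n ≤ u n * v (n + 1)) : Summable u := by
  obtain ⟨N, hN⟩ := (hv0.and huv).exists_forall_of_atTop
  have hdecr : ∀ n, N ≤ n → u n / v n ≤ u N / v N := by
    intro n hn
    induction n, hn using Nat.le_induction with
    | base => exact le_rfl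
    | succ n hn ih =>
      obtain ⟨hvn, hstep⟩ := hN n hn
      have hvn1 := (hN (n + 1) (by omega)).1
      refine le_trans ?_ ih
      rw [div_le_div_iff₀ hvn1 hvn]
      linarith
  refine summable_of_isBigO_nat' hv (Asymptotics.IsBigO.of_bound (u N / v N) ?_)
  filter_upwards [eventually_ge_atTop N] with n hn
  have hvn := (hN n hn).1
  rw [Real.norm_of_nonneg (hu n), Real.norm_of_nonneg hvn.le, ← div_le_iff₀ hvn]
  exact hdecr n hn

theorem summable_of_tendsto_natCast_mul_sub_one {u r : ℕ → ℝ} {L : ℝ} (hu : ∀ n, 0 ≤ u n)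
    (hur : ∀ᶠ n in atTop, u (n + 1) = u n * r n)
    (hr : Tendsto (fun n : ℕ => (n : ℝ) * (r n - 1)) atTop (𝓝 L)) (hL : L < -1) :
    Summable u := by
  obtain ⟨p, hp, hLp⟩ : ∃ p, 1 < p ∧ L < -p := ⟨(1 - L) / 2, by linarith, by linarith⟩
  refine summable_of_eventually_mul_succ_le_mul_succ (v := fun n => (n : ℝ) ^ (-p)) hu
    (Real.summable_nat_rpow.mpr (by linarith)) ?_ ?_
  · filter_upwards [eventually_gt_atTop 0] with n hn
    positivity
  filter_upwards [hur, hr.eventually (eventually_lt_nhds hLp), eventually_gt_atTop 0]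
    with n hun hlt hn0
  have hn : (0 : ℝ) < n := Nat.cast_pos.mpr hn0
  have hrn : r n ≤ (n / (n + 1)) ^ p := calc
    r n ≤ 1 - p / (n + 1) := by
      have h1 : p / n < 1 - r n := by rw [div_lt_iff₀ hn]; linarith
      have h2 : p / (n + 1) ≤ p / n := by gcongr; linarith
      linarith
    _ = 1 + p * (-1 / (n + 1)) := by ring
    _ ≤ (1 + -1 / (n + 1)) ^ p := one_add_mul_self_le_rpow_one_add
      (by rw [neg_div, neg_le_neg_iff, div_le_one (by positivity)]; linarith) hp.le
    _ = (n / (n + 1)) ^ p := by congr 1; field_simp; ring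
  have hpow : ((n : ℝ) / (n + 1)) ^ p * (n : ℝ) ^ (-p) = ((n + 1 : ℕ) : ℝ) ^ (-p) := by
    rw [Real.div_rpow hn.le (by positivity), Real.rpow_neg hn.le, Real.rpow_neg (by positivity)]
    push_cast
    field_simp
  have hun0 := hu n
  rw [hun, ← hpow, ← mul_assoc]
  gcongr

noncomputable def wellPoisedTerm {k : ℕ} (h₀ : ℂ) (h : Fin k → ℂ) (μ : ℕ) : ℂ :=
  (h₀ + 2 * μ) * (Gamma (h₀ + μ) * ∏ j, Gamma (h j + μ)) /
    (∏ j, Gamma (1 + h₀ - h j + μ)) * (1 / (μ.factorial : ℂ)) * (-1 : ℂ) ^ ((k + 1) * μ)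

theorem Gamma_add_natCast_succ (z : ℂ) (n : ℕ) (hz : z + n ≠ 0) :
    Gamma (z + (n + 1 : ℕ)) = (z + n) * Gamma (z + n) := by
  rw [Nat.cast_succ, ← add_assoc, Gamma_add_one _ hz]

theorem wellPoisedTerm_succ {k : ℕ} {h₀ : ℂ} {h : Fin k → ℂ} (hh₀ : ∀ n : ℕ, h₀ ≠ -n)
    (hh : ∀ j, ∀ n : ℕ, h j ≠ -n) {μ : ℕ} (hμ : ∀ j, 0 < (1 + h₀ - h j + μ).re) :
    wellPoisedTerm h₀ h (μ + 1) = wellPoisedTerm h₀ h μ * ((-1) ^ (k + 1) *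
      ((h₀ / 2 + 1 + μ) / (h₀ / 2 + μ) *
        ((h₀ + μ) / (1 + μ) * ∏ j, (h j + μ) / (1 + h₀ - h j + μ)))) := by
  have hne : ∀ z : ℂ, (∀ n : ℕ, z ≠ -n) → z + μ ≠ 0 := fun z hz hzμ =>
    hz μ (eq_neg_of_add_eq_zero_left hzμ)
  have hb : ∀ j, 1 + h₀ - h j + μ ≠ 0 := fun j hj => by simpa [hj] using hμ j
  have hΓb : ∀ j, Gamma (1 + h₀ - h j + μ) ≠ 0 := fun j => Gamma_ne_zero_of_re_pos (hμ j)
  have h2μ : h₀ + 2 * μ ≠ 0 := fun h2 => hh₀ (2 * μ) (by push_cast; linear_combination h2)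
  have hhalf : h₀ / 2 + μ ≠ 0 := fun h2 => h2μ (by linear_combination 2 * h2)
  have h1μ : (1 : ℂ) + μ ≠ 0 := by rw [add_comm]; exact Nat.cast_add_one_ne_zero μ
  have hfact : (μ.factorial : ℂ) ≠ 0 := by exact_mod_cast μ.factorial_ne_zero
  unfold wellPoisedTerm
  rw [Gamma_add_natCast_succ _ _ (hne h₀ hh₀),
    Finset.prod_congr rfl fun j _ => Gamma_add_natCast_succ _ _ (hne (h j) (hh j)),
    Finset.prod_congr rfl fun j _ => Gamma_add_natCast_succ _ _ (hb j),
    Finset.prod_mul_distrib, Finset.prod_mul_distrib, Finset.prod_div_distrib,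
    Nat.factorial_succ, mul_add, mul_one, pow_add]
  have : ∏ j, (1 + h₀ - h j + μ) ≠ 0 := Finset.prod_ne_zero_iff.mpr fun j _ => hb j
  have : ∏ j, Gamma (1 + h₀ - h j + μ) ≠ 0 := Finset.prod_ne_zero_iff.mpr fun j _ => hΓb j
  push_cast
  field_simp
  ring

theorem stmt_8 (k : ℕ) (hk : 2 ≤ k) (h₀ : ℂ) (h : Fin k → ℂ)
    (hp0 : ∀ n : ℕ, h₀ ≠ -n) (hp : ∀ j, ∀ n : ℕ, h j ≠ -n)
    (hconv : 2 / ((k : ℝ) - 1) * ∑ j, (h j).re < 1 + h₀.re) :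
    Summable (fun μ : ℕ =>
      ‖(h₀ + 2 * μ) * (Gamma (h₀ + μ) * ∏ j, Gamma (h j + μ)) /
          (∏ j, Gamma (1 + h₀ - h j + μ)) * (1 / (μ.factorial : ℂ)) *
          (-1 : ℂ) ^ ((k + 1) * μ)‖) := by
  set a : Fin (k + 2) → ℂ := Fin.cons (h₀ / 2 + 1) (Fin.cons h₀ h)
  set b : Fin (k + 2) → ℂ := Fin.cons (h₀ / 2) (Fin.cons 1 fun j => 1 + h₀ - h j)
  have hab : (∑ i, (a i - b i)).re < -1 := by
    have hk1 : (0 : ℝ) < k - 1 := by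
      have : (2 : ℝ) ≤ k := by exact_mod_cast hk
      linarith
    rw [div_mul_eq_mul_div, div_lt_iff₀ hk1] at hconv
    simp only [Finset.sum_sub_distrib, Fin.sum_univ_succ, Fin.cons_zero, Fin.cons_succ,
      Finset.sum_const, Finset.card_univ, Fintype.card_fin, nsmul_eq_mul, sub_re, add_re, mul_re,
      div_ofNat_re, one_re, re_sum, natCast_re, natCast_im, zero_mul, sub_zero, a, b]
    linarith
  refine summable_of_tendsto_natCast_mul_sub_one (fun _ => norm_nonneg _) ?_
    (tendsto_natCast_mul_norm_prod_sub_one Finset.univ a b) hab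
  have hre : ∀ᶠ μ : ℕ in atTop, ∀ j, 0 < (1 + h₀ - h j + μ).re := eventually_all.mpr fun j =>
    (tendsto_natCast_atTop_atTop.eventually_gt_atTop (-(1 + h₀ - h j).re)).mono fun μ hμ => by
      simp only [add_re, natCast_re]
      linarith
  filter_upwards [hre] with μ hμ
  change ‖wellPoisedTerm h₀ h (μ + 1)‖ = ‖wellPoisedTerm h₀ h μ‖ * _
  rw [wellPoisedTerm_succ hp0 hp hμ, norm_mul, norm_mul, norm_pow, norm_neg, norm_one, one_pow,
    one_mul]
  simp only [a, b, Fin.prod_univ_succ, Fin.cons_zero, Fin.cons_succ]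
end

section
/- Let k ≥ 1 and let a₀, a₁, …, a_k, b₁, …, b_k be complex numbers with Re a_j > 0 and Re(b_j - a_j) > 0 for j = 1, …, k, and Re b_j > Re a₀ + Re a_j for all j. Then the multiple integral J_k(a;b) = ∫_{[0,1]^k} Π_{j=1}^k x_j^{a_j-1}(1-x_j)^{b_j-a_j-1} · Q_k(x₁,…,x_k)^{-a₀} dx₁⋯dx_k converges absolutely. -/
/-!
Since `∏ (1 - xⱼ) ≤ Q_k(x) ≤ 1` on the cube, `|Q_k(x)^(-a₀)| = Q_k(x)^(-Re a₀)` is at most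
`∏ (1 - xⱼ)^(-c)` with `c = max (Re a₀) 0`. The integrand is therefore dominated by a product of
one-variable Beta integrands with exponents `Re aⱼ` and `Re (bⱼ - aⱼ) - c`, both positive by
hypothesis, and such a product is integrable on the cube.
-/

open MeasureTheory

noncomputable def Q : ∀ k : ℕ, (Fin k → ℝ) → ℝ
  | 0, _ => 1
  | k + 1, x => 1 - x 0 * Q k (fun i => x i.succ)

open Set

theorem continuous_Q (k : ℕ) : Continuous (Q k) := by
  induction k with
  | zero => exact continuous_const
  | succ k ih =>
    show Continuous fun x : Fin (k + 1) → ℝ => 1 - x 0 * Q k fun i => x i.succ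
    fun_prop

theorem Q_mem_Icc {k : ℕ} {x : Fin k → ℝ} (hx : ∀ i, x i ∈ Icc (0 : ℝ) 1) :
    Q k x ∈ Icc (∏ i, (1 - x i)) 1 := by
  induction k with
  | zero => simp [Q]
  | succ k ih =>
    obtain ⟨hPQ, hQ1⟩ := ih fun i => hx i.succ
    have hP0 : 0 ≤ ∏ i : Fin k, (1 - x i.succ) :=
      Finset.prod_nonneg fun i _ => sub_nonneg.2 (hx i.succ).2
    have hP1 : ∏ i : Fin k, (1 - x i.succ) ≤ 1 :=
      Finset.prod_le_one (fun i _ => sub_nonneg.2 (hx i.succ).2)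
        fun i _ => sub_le_self _ (hx i.succ).1
    obtain ⟨h0, h1⟩ := hx 0
    rw [Fin.prod_univ_succ, mem_Icc]
    simp only [Q]
    constructor <;> nlinarith

theorem Q_pos {k : ℕ} {x : Fin k → ℝ} (hx : ∀ i, x i ∈ Ioo (0 : ℝ) 1) : 0 < Q k x :=
  (Finset.prod_pos fun i _ => sub_pos.2 (hx i).2).trans_le
    (Q_mem_Icc fun i => Ioo_subset_Icc_self (hx i)).1

theorem Q_rpow_neg_le_prod {k : ℕ} {x : Fin k → ℝ} (hx : ∀ i, x i ∈ Ioo (0 : ℝ) 1) (s : ℝ) :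
    Q k x ^ (-s) ≤ ∏ i, (1 - x i) ^ (-max s 0) := by
  obtain ⟨hPQ, hQ1⟩ := Q_mem_Icc fun i => Ioo_subset_Icc_self (hx i)
  have hP : 0 < ∏ i, (1 - x i) := Finset.prod_pos fun i _ => sub_pos.2 (hx i).2
  calc Q k x ^ (-s) ≤ Q k x ^ (-max s 0) :=
        Real.rpow_le_rpow_of_exponent_ge (hP.trans_le hPQ) hQ1 (by simp)
    _ ≤ (∏ i, (1 - x i)) ^ (-max s 0) :=
        Real.rpow_le_rpow_of_nonpos hP hPQ (by simp)
    _ = ∏ i, (1 - x i) ^ (-max s 0) :=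
        Real.finsetProd_rpow _ _ (fun i _ => (sub_pos.2 (hx i).2).le) _ |>.symm

theorem norm_cpow_mul_one_sub_cpow {t : ℝ} (ht : t ∈ Ioo (0 : ℝ) 1) (u v : ℂ) :
    ‖(t : ℂ) ^ u * (1 - (t : ℂ)) ^ v‖ = t ^ u.re * (1 - t) ^ v.re := by
  have h1t : (1 - (t : ℂ)) = ((1 - t : ℝ) : ℂ) := by push_cast; rfl
  rw [norm_mul, h1t, Complex.norm_cpow_eq_rpow_re_of_pos ht.1,
    Complex.norm_cpow_eq_rpow_re_of_pos (sub_pos.2 ht.2)]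

theorem integrableOn_rpow_mul_one_sub_rpow {p q : ℝ} (hp : -1 < p) (hq : -1 < q) :
    IntegrableOn (fun t : ℝ => t ^ p * (1 - t) ^ q) (Ioo 0 1) := by
  have hβ := Complex.betaIntegral_convergent (u := ↑(p + 1)) (v := ↑(q + 1))
    (by simp; linarith) (by simp; linarith)
  rw [intervalIntegrable_iff_integrableOn_Ioo_of_le zero_le_one] at hβ
  refine IntegrableOn.congr_fun hβ.norm (fun t ht => ?_) measurableSet_Ioo
  rw [norm_cpow_mul_one_sub_cpow ht]
  simp

theorem integrableOn_univ_pi_prod {ι E 𝕜 : Type*} [Fintype ι] [MeasureSpace E]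
    [SigmaFinite (volume : Measure E)] [NormedCommRing 𝕜] {f : ι → E → 𝕜} {s : ι → Set E}
    (hf : ∀ i, IntegrableOn (f i) (s i)) :
    IntegrableOn (fun x : ι → E => ∏ i, f i (x i)) (univ.pi s) := by
  rw [IntegrableOn, volume_pi, Measure.restrict_pi_pi]
  exact Integrable.fintype_prod hf

theorem norm_prod_cpow_mul_Q_cpow_le {k : ℕ} {x : Fin k → ℝ} (hx : ∀ i, x i ∈ Ioo (0 : ℝ) 1)
    (u v : Fin k → ℂ) (s : ℂ) :
    ‖(∏ j, (x j : ℂ) ^ u j * (1 - (x j : ℂ)) ^ v j) * (Q k x : ℂ) ^ (-s)‖ ≤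
      ∏ j, x j ^ (u j).re * (1 - x j) ^ ((v j).re - max s.re 0) := by
  have hprod_nonneg : 0 ≤ ∏ j, x j ^ (u j).re * (1 - x j) ^ (v j).re :=
    Finset.prod_nonneg fun j _ =>
      mul_nonneg (Real.rpow_nonneg (hx j).1.le _) (Real.rpow_nonneg (sub_pos.2 (hx j).2).le _)
  calc ‖(∏ j, (x j : ℂ) ^ u j * (1 - (x j : ℂ)) ^ v j) * (Q k x : ℂ) ^ (-s)‖
      = (∏ j, x j ^ (u j).re * (1 - x j) ^ (v j).re) * Q k x ^ (-s.re) := by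
        rw [norm_mul, norm_prod, Complex.norm_cpow_eq_rpow_re_of_pos (Q_pos hx)]
        simp only [norm_cpow_mul_one_sub_cpow (hx _), Complex.neg_re]
    _ ≤ (∏ j, x j ^ (u j).re * (1 - x j) ^ (v j).re) * ∏ j, (1 - x j) ^ (-max s.re 0) :=
        mul_le_mul_of_nonneg_left (Q_rpow_neg_le_prod hx s.re) hprod_nonneg
    _ = ∏ j, x j ^ (u j).re * (1 - x j) ^ ((v j).re - max s.re 0) := by
        rw [← Finset.prod_mul_distrib]
        refine Finset.prod_congr rfl fun j _ => ?_
        rw [mul_assoc, ← Real.rpow_add (sub_pos.2 (hx j).2), ← sub_eq_add_neg]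

theorem continuousOn_prod_cpow_mul_Q_cpow (k : ℕ) (u v : Fin k → ℂ) (s : ℂ) :
    ContinuousOn (fun x : Fin k → ℝ =>
        (∏ j, (x j : ℂ) ^ u j * (1 - (x j : ℂ)) ^ v j) * (Q k x : ℂ) ^ (-s))
      (univ.pi fun _ => Ioo 0 1) := by
  refine continuousOn_of_forall_continuousAt fun x hx => ?_
  rw [mem_univ_pi] at hx
  refine ContinuousAt.mul (tendsto_finsetProd _ fun j _ => ?_) ?_
  · have hxj : Continuous fun y : Fin k → ℝ => (y j : ℂ) :=
      Complex.continuous_ofReal.comp (continuous_apply j)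
    have h1 : (1 : ℂ) - (x j : ℂ) ∈ Complex.slitPlane := by
      rw [← Complex.ofReal_one, ← Complex.ofReal_sub]
      exact Complex.ofReal_mem_slitPlane.2 (sub_pos.2 (hx j).2)
    have h0 : (x j : ℂ) ∈ Complex.slitPlane := Complex.ofReal_mem_slitPlane.2 (hx j).1
    exact (hxj.continuousAt.cpow continuousAt_const h0).mul
      ((continuousAt_const.sub hxj.continuousAt).cpow continuousAt_const h1)
  · have hQ : Continuous fun y => (Q k y : ℂ) := Complex.continuous_ofReal.comp (continuous_Q k)
    exact hQ.continuousAt.cpow continuousAt_const (Complex.ofReal_mem_slitPlane.2 (Q_pos hx))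

theorem stmt_13_general (k : ℕ) (a₀ : ℂ) (a b : Fin k → ℂ)
    (ha : ∀ j, 0 < (a j).re) (hba : ∀ j, 0 < (b j - a j).re)
    (hb : ∀ j, a₀.re + (a j).re < (b j).re) :
    IntegrableOn
      (fun x : Fin k → ℝ =>
        (∏ j, (x j : ℂ) ^ (a j - 1) * ((1 : ℂ) - x j) ^ (b j - a j - 1)) *
          ((Q k x : ℝ) : ℂ) ^ (-a₀))
      (Set.univ.pi fun _ => Set.Ioo (0 : ℝ) 1) := by
  have hcube : MeasurableSet (univ.pi fun _ : Fin k => Ioo (0 : ℝ) 1) :=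
    MeasurableSet.univ_pi fun _ => measurableSet_Ioo
  have hmajorant := integrableOn_univ_pi_prod fun j =>
    integrableOn_rpow_mul_one_sub_rpow (p := (a j - 1).re)
      (q := (b j - a j - 1).re - max a₀.re 0) (by simp [ha j]) (by
        have hmax : max a₀.re 0 < (b j - a j).re :=
          max_lt (by rw [Complex.sub_re]; linarith [hb j]) (hba j)
        rw [Complex.sub_re, Complex.one_re]
        linarith)
  refine hmajorant.mono'
    ((continuousOn_prod_cpow_mul_Q_cpow k _ _ a₀).aestronglyMeasurable hcube) ?_
  filter_upwards [ae_restrict_mem hcube] with x hx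
  exact norm_prod_cpow_mul_Q_cpow_le (fun j => hx j (mem_univ j)) _ _ a₀

theorem stmt_13 (k : ℕ) (hk : 1 ≤ k) (a₀ : ℂ) (a b : Fin k → ℂ)
    (ha : ∀ j, 0 < (a j).re) (hba : ∀ j, 0 < (b j - a j).re)
    (hb : ∀ j, a₀.re + (a j).re < (b j).re) :
    IntegrableOn
      (fun x : Fin k → ℝ =>
        (∏ j, (x j : ℂ) ^ (a j - 1) * ((1 : ℂ) - x j) ^ (b j - a j - 1)) *
          ((Q k x : ℝ) : ℂ) ^ (-a₀))
      (Set.univ.pi fun _ => Set.Ioo (0 : ℝ) 1) :=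
  stmt_13_general k a₀ a b ha hba hb
end
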